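/- arXiv:math/0406484 — 2 statements merged into one kernel-verified Lean document; each statement's English description precedes it below -/
import Mathlib

section
/- Let ε > 0 and ν ≥ 1 be fixed. Then (i) there exists K > 0 such that for all sufficiently large n, sup over z ∈ ℂ of ∫_{2^{−ε}}^{2^{ε}} r′·e^{−n·|log r′|}·|log r′|^{ν−1}·(∫_{−π}^{π} dθ′/|r′·e^{iθ′} − z|) dr′ ≤ K·log(n)/n^{ν}; and (ii) for each ρ > 2^{ε} there exists K′ > 0 such that for all sufficiently large n, sup over z with |log|z|| ≥ log ρ of the same iterated integral is ≤ K′/n^{ν}. -/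
open scoped Real
open Complex MeasureTheory Filter Set

noncomputable section

/-- The inner product associated with a weight `w` on the unit circle:
`⟨f,g⟩_w = (1/(2π)) ∫_{-π}^{π} f(θ) conj(g(θ)) w(θ) dθ`. -/
def ip (w : ℝ → ℝ) (f g : ℝ → ℂ) : ℂ :=
  (1 / (2 * π)) * ∫ θ in (-π)..π, f θ * (starRingEnd ℂ) (g θ) * (w θ : ℂ)

/-- `P` is the monic orthogonal polynomial of degree `n` for the weight `w`:
monic, of degree `n`, and orthogonal to `e^{ijθ}` for all `0 ≤ j < n`. -/
def IsMonicOPUC (w : ℝ → ℝ) (n : ℕ) (P : Polynomial ℂ) : Prop :=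
  P.Monic ∧ P.natDegree = n ∧
    ∀ j < n,
      ip w (fun θ => P.eval (Complex.exp (Complex.I * θ)))
        (fun θ => Complex.exp (Complex.I * (j : ℂ) * θ)) = 0

/-- `γ > 0` is the normalization constant of `P` w.r.t. the weight `w`:
`γ² ⟨P(e^{iθ}), P(e^{iθ})⟩_w = 1`. -/
def IsNormConst (w : ℝ → ℝ) (P : Polynomial ℂ) (γ : ℝ) : Prop :=
  0 < γ ∧
    (γ : ℂ) ^ 2 *
      ip w (fun θ => P.eval (Complex.exp (Complex.I * θ)))
        (fun θ => P.eval (Complex.exp (Complex.I * θ))) = 1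

/-- `V` is `2π`-periodic of class `C^{k-1,1}(S¹)`: `V` is `(k-1)` times continuously
differentiable and `V^{(k-1)}` is Lipschitz. -/
def ClassC (k : ℕ) (V : ℝ → ℝ) : Prop :=
  Function.Periodic V (2 * π) ∧ ContDiff ℝ (k - 1 : ℕ) V ∧
    ∃ L : NNReal, LipschitzWith L (iteratedDeriv (k - 1) V)

/-- Fourier coefficient `V_j = (1/(2π)) ∫_{-π}^{π} V(θ) e^{-ijθ} dθ`. -/
def Fc (V : ℝ → ℝ) (j : ℤ) : ℂ :=
  (1 / (2 * π)) * ∫ θ in (-π)..π, (V θ : ℂ) * Complex.exp (-Complex.I * (j : ℂ) * θ)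

/-- `N(z) = Σ_{j=1}^{∞} V_{-j} z^{-j}` (relevant for `|z| ≥ 1`). -/
def Nout (V : ℝ → ℝ) (z : ℂ) : ℂ := ∑' j : ℕ, Fc V (-(j + 1 : ℤ)) / z ^ (j + 1)

/-- `N̂(z) = Σ_{j=1}^{∞} V_j z^j` (relevant for `|z| ≤ 1`). -/
def Nin (V : ℝ → ℝ) (z : ℂ) : ℂ := ∑' j : ℕ, Fc V ((j : ℤ) + 1) * z ^ (j + 1)

/-- `Ω(θ) = 2 Im N(e^{iθ})`. -/
def Omg (V : ℝ → ℝ) (θ : ℝ) : ℝ := 2 * (Nout V (Complex.exp (Complex.I * θ))).im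

/-- The mean value `V₀ = (1/(2π)) ∫_{-π}^{π} V(θ) dθ`. -/
def Vmean (V : ℝ → ℝ) : ℝ := (1 / (2 * π)) * ∫ θ in (-π)..π, V θ

/-- The extension operator `E_m f(r,θ) = Σ_{p=0}^{m-1} (f^{(p)}(θ)/p!) (-i log r)^p`. -/
def ExtOp (m : ℕ) (f : ℝ → ℝ) (r θ : ℝ) : ℂ :=
  ∑ p ∈ Finset.range m,
    ((iteratedDeriv p f θ : ℝ) : ℂ) / (Nat.factorial p : ℂ) * (-Complex.I * (Real.log r : ℂ)) ^ p

end
noncomputable section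

/-- The norm `‖f‖_w = ⟨f,f⟩_w^{1/2}` induced by the inner product `ip w`. -/
def nrm (w : ℝ → ℝ) (f : ℝ → ℂ) : ℝ := Real.sqrt (ip w f f).re

/-- A smooth "bump" function: `B : ℝ → [0,1]`, infinitely differentiable, `B ≡ 1` for
`|l| ≤ log 2 / 2` and `B ≡ 0` for `|l| ≥ log 2`. -/
def IsBump (B : ℝ → ℝ) : Prop :=
  ContDiff ℝ (⊤ : ℕ∞) B ∧ (∀ l, B l ∈ Set.Icc (0 : ℝ) 1) ∧
    (∀ l, |l| ≤ Real.log 2 / 2 → B l = 1) ∧ (∀ l, Real.log 2 ≤ |l| → B l = 0)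

/-- The rational function
`f_n(z) = (i^{k+1}/(2π)) Σ_j Δ_j e^{iΩ(θ_j)} e^{i(n+1)θ_j} / (e^{iθ_j} - z)`. -/
def fnfun (k ℓ : ℕ) (θj Δ : Fin ℓ → ℝ) (W : ℝ → ℝ) (n : ℕ) (z : ℂ) : ℂ :=
  Complex.I ^ (k + 1) / (2 * (π : ℂ)) *
    ∑ j : Fin ℓ, ((Δ j : ℝ) : ℂ) * Complex.exp (Complex.I * ((W (θj j) : ℝ) : ℂ)) *
      Complex.exp (Complex.I * ((n : ℂ) + 1) * ((θj j : ℝ) : ℂ)) /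
        (Complex.exp (Complex.I * ((θj j : ℝ) : ℂ)) - z)

/-- `V^{(k)}` is piecewise continuous, with `ℓ` jump discontinuities at the points
`-π ≤ θ_1 < ⋯ < θ_ℓ < π` of magnitudes `Δ_j = V^{(k)}(θ_j+) - V^{(k)}(θ_j-)`, and has one
Lipschitz continuous derivative between consecutive jump discontinuities.  Here `W` plays the
role of `V^{(k)}`, i.e. the derivative of `V^{(k-1)}` away from the (2π-translates of the)
jump points. -/
def JumpData (k : ℕ) (V : ℝ → ℝ) (ℓ : ℕ) (θj Δ : Fin ℓ → ℝ) : Prop :=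
  StrictMono θj ∧ (∀ j, θj j ∈ Set.Ico (-π) π) ∧
    ∃ W : ℝ → ℝ, Function.Periodic W (2 * π) ∧
      (∀ x : ℝ, (∀ j : Fin ℓ, ∀ m : ℤ, x ≠ θj j + 2 * π * m) →
        HasDerivAt (iteratedDeriv (k - 1) V) (W x) x) ∧
      (∀ j : Fin ℓ, ∃ wp wm : ℝ,
        Filter.Tendsto W (nhdsWithin (θj j) (Set.Ioi (θj j))) (nhds wp) ∧
        Filter.Tendsto W (nhdsWithin (θj j) (Set.Iio (θj j))) (nhds wm) ∧
        Δ j = wp - wm) ∧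
      (∀ a b : ℝ, (∀ x ∈ Set.Ioo a b, ∀ j : Fin ℓ, ∀ m : ℤ, x ≠ θj j + 2 * π * m) →
        (∃ W' : ℝ → ℝ, (∀ x ∈ Set.Ioo a b, HasDerivAt W (W' x) x) ∧
          ∃ L : NNReal, LipschitzOnWith L W' (Set.Ioo a b)))

end
/-- comparison with junk-value handling -/
lemma helper_le_intervalIntegral {a b : ℝ} (hab : a ≤ b) {f g : ℝ → ℝ}
    (hg : IntervalIntegrable g volume a b)
    (hf0 : ∀ x ∈ Set.Ioc a b, 0 ≤ f x)
    (hfg : ∀ᵐ x ∂(volume.restrict (Set.Icc a b)), f x ≤ g x) :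
    (∫ x in a..b, f x) ≤ ∫ x in a..b, g x := by
  by_cases hf : IntervalIntegrable f volume a b
  · exact intervalIntegral.integral_mono_ae_restrict hab hf hg hfg
  · rw [intervalIntegral.integral_undef hf, intervalIntegral.integral_of_le hab]
    have hfg' : ∀ᵐ x ∂(volume.restrict (Set.Ioc a b)), f x ≤ g x :=
      hfg.filter_mono (ae_mono (Measure.restrict_mono Set.Ioc_subset_Icc_self le_rfl))
    have hmem : ∀ᵐ x ∂(volume.restrict (Set.Ioc a b)), x ∈ Set.Ioc a b :=
      ae_restrict_mem measurableSet_Ioc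
    refine MeasureTheory.integral_nonneg_of_ae ?_
    filter_upwards [hfg', hmem] with x h1 h2
    exact (hf0 x h2).trans h1

lemma cont_rpow_const {p : ℝ} (hp : 0 ≤ p) : Continuous fun x : ℝ => x ^ p :=
  continuous_iff_continuousAt.2 fun x => Real.continuousAt_rpow_const x p (Or.inr hp)

lemma exp_mul_rpow_le {p : ℝ} (hp : 0 ≤ p) :
    ∃ c : ℝ, 0 < c ∧ ∀ y : ℝ, 0 ≤ y → y ^ p * Real.exp (-y) ≤ c := by
  refine ⟨(Nat.factorial (Nat.ceil p)) + 1, by positivity, fun y hy => ?_⟩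
  have hm : (0:ℝ) ≤ (y : ℝ) ^ (Nat.ceil p : ℕ) := by positivity
  have h1 : y ^ p ≤ y ^ (Nat.ceil p : ℕ) + 1 := by
    rcases le_total y 1 with h | h
    · have : y ^ p ≤ 1 := Real.rpow_le_one hy h hp
      linarith
    · have : y ^ p ≤ y ^ ((Nat.ceil p : ℕ) : ℝ) :=
        Real.rpow_le_rpow_of_exponent_le h (Nat.le_ceil p)
      rw [Real.rpow_natCast] at this
      linarith
  have h2 : (y : ℝ) ^ (Nat.ceil p : ℕ) * Real.exp (-y) ≤ (Nat.factorial (Nat.ceil p)) := by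
    have h3 := Real.pow_div_factorial_le_exp (x := y) hy (Nat.ceil p)
    have h4 : (0:ℝ) < (Nat.factorial (Nat.ceil p)) := by positivity
    rw [div_le_iff₀ h4] at h3
    rw [Real.exp_neg]
    rw [mul_inv_le_iff₀ (Real.exp_pos y)]
    calc (y:ℝ) ^ (Nat.ceil p : ℕ) ≤ Real.exp y * (Nat.factorial (Nat.ceil p)) := h3
      _ = (Nat.factorial (Nat.ceil p)) * Real.exp y := by ring
  have hexp : Real.exp (-y) ≤ 1 := Real.exp_le_one_iff.2 (by linarith)
  calc y ^ p * Real.exp (-y) ≤ ((y:ℝ) ^ (Nat.ceil p : ℕ) + 1) * Real.exp (-y) := by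
        exact mul_le_mul_of_nonneg_right h1 (Real.exp_pos _).le
    _ = (y:ℝ) ^ (Nat.ceil p : ℕ) * Real.exp (-y) + Real.exp (-y) := by ring
    _ ≤ (Nat.factorial (Nat.ceil p)) + 1 := by
        have := (Real.exp_pos (-y)).le
        gcongr

lemma norm_ge_abs_sub (r : ℝ) (hr : 0 ≤ r) (θ : ℝ) (z : ℂ) :
    |r - ‖z‖| ≤ ‖(r : ℂ) * Complex.exp (Complex.I * θ) - z‖ := by
  have h1 : ‖(r : ℂ) * Complex.exp (Complex.I * θ)‖ = r := by
    rw [norm_mul, Complex.norm_exp]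
    simp [_root_.abs_of_nonneg hr]
  simpa [h1, _root_.abs_of_nonneg hr] using abs_norm_sub_norm_le ((r : ℂ) * Complex.exp (Complex.I * θ)) z

lemma norm_ge_sin (r : ℝ) (hr : 0 ≤ r) (θ : ℝ) (z : ℂ) :
    r * |Real.sin (θ - z.arg)| ≤ ‖(r : ℂ) * Complex.exp (Complex.I * θ) - z‖ := by
  set φ := z.arg with hφ
  have key : (r : ℂ) * Complex.exp (Complex.I * θ) - z =
      Complex.exp ((φ : ℂ) * Complex.I) *
        ((r : ℂ) * Complex.exp (Complex.I * ((θ - φ : ℝ) : ℂ)) - ((‖z‖ : ℝ) : ℂ)) := by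
    rw [mul_sub]
    congr 1
    · rw [mul_left_comm, ← Complex.exp_add]
      congr 2
      push_cast
      ring
    · rw [mul_comm]
      exact (Complex.norm_mul_exp_arg_mul_I z).symm
  rw [key, norm_mul]
  have h2 : ‖Complex.exp ((φ : ℂ) * Complex.I)‖ = 1 := by
    rw [Complex.norm_exp]
    simp
  rw [h2, one_mul]
  have h3 : ((r : ℂ) * Complex.exp (Complex.I * ((θ - φ : ℝ) : ℂ)) -
      ((‖z‖ : ℝ) : ℂ)).im = r * Real.sin (θ - φ) := by
    rw [mul_comm Complex.I, Complex.exp_mul_I]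
    simp only [← Complex.ofReal_cos, ← Complex.ofReal_sin, Complex.sub_im, Complex.mul_im,
      Complex.add_im, Complex.add_re, Complex.ofReal_re, Complex.ofReal_im, Complex.mul_re,
      Complex.I_re, Complex.I_im]
    ring
  calc r * |Real.sin (θ - φ)| = |r * Real.sin (θ - φ)| := by
        rw [abs_mul, _root_.abs_of_nonneg hr]
    _ ≤ _ := by rw [← h3]; exact Complex.abs_im_le_norm _

lemma jordan_abs {v : ℝ} (hv : |v| ≤ π / 2) : 2 / π * |v| ≤ |Real.sin v| := by
  have hπ := Real.pi_pos
  have h2 : 2 / π * |v| ≤ Real.sin |v| := Real.mul_le_sin (abs_nonneg v) hv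
  have h3 : Real.sin |v| = |Real.sin v| := by
    rcases abs_cases v with ⟨h, h'⟩ | ⟨h, h'⟩
    · rw [h, _root_.abs_of_nonneg (Real.sin_nonneg_of_nonneg_of_le_pi h'
        (by rw [← h]; linarith))]
    · have hs : Real.sin v ≤ 0 := by
        have h4 : 0 ≤ Real.sin (-v) :=
          Real.sin_nonneg_of_nonneg_of_le_pi (by linarith) (by rw [← h]; linarith)
        rw [Real.sin_neg, neg_nonneg] at h4
        exact h4
      rw [h, Real.sin_neg, _root_.abs_of_nonpos hs]
  rwa [h3] at h2

lemma intInt_abs_rpow (a b : ℝ) :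
    IntervalIntegrable (fun t : ℝ => |t| ^ (-(1/2) : ℝ)) volume a b := by
  have h : ∀ c : ℝ, 0 ≤ c →
      IntervalIntegrable (fun t : ℝ => |t| ^ (-(1/2) : ℝ)) volume 0 c := by
    intro c hc
    have base := intervalIntegral.intervalIntegrable_rpow' (a := 0) (b := c)
      (r := -(1/2)) (by norm_num)
    rw [intervalIntegrable_iff, uIoc_of_le hc] at base ⊢
    exact base.congr_fun (fun t ht => by
      show t ^ (-(1/2) : ℝ) = |t| ^ (-(1/2) : ℝ)
      rw [_root_.abs_of_pos ht.1]) measurableSet_Ioc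
  have h' : ∀ c : ℝ, IntervalIntegrable (fun t : ℝ => |t| ^ (-(1/2) : ℝ)) volume 0 c := by
    intro c
    rcases le_total 0 c with hc | hc
    · exact h c hc
    · rw [IntervalIntegrable.iff_comp_neg]
      simpa [abs_neg] using h (-c) (by linarith)
  exact (h' a).symm.trans (h' b)

lemma integral_abs_rpow {δ : ℝ} (hδ : 0 ≤ δ) :
    (∫ t in (-δ)..δ, |t| ^ (-(1/2) : ℝ)) = 4 * δ ^ ((1/2) : ℝ) := by
  have hpos : (∫ t in (0:ℝ)..δ, |t| ^ (-(1/2) : ℝ)) = 2 * δ ^ ((1/2) : ℝ) := by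
    have heq : (∫ t in (0:ℝ)..δ, |t| ^ (-(1/2) : ℝ)) = ∫ t in (0:ℝ)..δ, t ^ (-(1/2) : ℝ) := by
      apply intervalIntegral.integral_congr
      intro t ht
      rw [uIcc_of_le hδ] at ht
      show |t| ^ (-(1/2) : ℝ) = t ^ (-(1/2) : ℝ)
      rw [_root_.abs_of_nonneg ht.1]
    rw [heq, integral_rpow (Or.inl (by norm_num))]
    have : (-(1/2) : ℝ) + 1 = 1/2 := by norm_num
    rw [this, Real.zero_rpow (by norm_num)]
    ring
  have hneg : (∫ t in (-δ)..(0:ℝ), |t| ^ (-(1/2) : ℝ)) = 2 * δ ^ ((1/2) : ℝ) := by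
    have h5 := intervalIntegral.integral_comp_neg (a := (0:ℝ)) (b := δ)
      (f := fun t : ℝ => |t| ^ (-(1/2) : ℝ))
    simp only [abs_neg, neg_zero] at h5
    rw [← hpos, ← h5]
  rw [← intervalIntegral.integral_add_adjacent_intervals (intInt_abs_rpow (-δ) 0)
    (intInt_abs_rpow 0 δ), hpos, hneg]
  ring

lemma cont_rpow_const' {p : ℝ} (hp : 0 ≤ p) : Continuous fun x : ℝ => x ^ p :=
  continuous_iff_continuousAt.2 fun x => Real.continuousAt_rpow_const x p (Or.inr hp)

lemma outerA (ε ν : ℝ) (hε : 0 < ε) (hν : 1 ≤ ν) :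
    ∃ C : ℝ, 0 < C ∧ ∀ n : ℕ, 1 ≤ n →
      IntervalIntegrable (fun r => r * Real.exp (-(n:ℝ) * |Real.log r|) * |Real.log r| ^ (ν-1))
        volume ((2:ℝ) ^ (-ε)) ((2:ℝ) ^ ε) ∧
      (∫ r in ((2:ℝ) ^ (-ε))..((2:ℝ) ^ ε),
          r * Real.exp (-(n:ℝ) * |Real.log r|) * |Real.log r| ^ (ν-1)) ≤ C / (n:ℝ) ^ ν := by
  set a : ℝ := (2:ℝ) ^ (-ε) with ha_def
  set b : ℝ := (2:ℝ) ^ ε with hb_def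
  have ha : 0 < a := Real.rpow_pos_of_pos two_pos _
  have hb : 0 < b := Real.rpow_pos_of_pos two_pos _
  have ha1 : a < 1 := Real.rpow_lt_one_of_one_lt_of_neg one_lt_two (by linarith)
  have hb1 : 1 < b := by
    have := Real.rpow_lt_rpow_of_exponent_lt one_lt_two (show (0:ℝ) < ε from hε)
    rwa [Real.rpow_zero] at this
  have hp : 0 ≤ ν - 1 := by linarith
  have hν0 : 0 < ν := by linarith
  refine ⟨Real.Gamma ν / a ^ (ν-1) + Real.Gamma ν * b * b ^ ν, by
    have := Real.Gamma_pos_of_pos hν0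
    positivity, fun n hn => ?_⟩
  have hn0 : (0:ℝ) < n := by exact_mod_cast hn
  set w : ℝ → ℝ := fun r => r * Real.exp (-(n:ℝ) * |Real.log r|) * |Real.log r| ^ (ν-1)
    with hw_def
  -- continuity of w away from 0
  have hwc : ContinuousOn w {x : ℝ | x ≠ 0} := by
    apply ContinuousOn.mul
    apply ContinuousOn.mul continuousOn_id
    · exact (Real.continuous_exp.comp
        ((continuous_const.mul _root_.continuous_abs))).comp_continuousOn Real.continuousOn_log
    · exact ((cont_rpow_const' hp).comp _root_.continuous_abs).comp_continuousOn Real.continuousOn_log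
  have hsub1 : Set.uIcc a 1 ⊆ {x : ℝ | x ≠ 0} := by
    rw [uIcc_of_le ha1.le]
    intro x hx; exact (lt_of_lt_of_le ha hx.1).ne'
  have hsub2 : Set.uIcc (1:ℝ) b ⊆ {x : ℝ | x ≠ 0} := by
    rw [uIcc_of_le hb1.le]
    intro x hx; exact (lt_of_lt_of_le one_pos hx.1).ne'
  have hwa1 : IntervalIntegrable w volume a 1 := (hwc.mono hsub1).intervalIntegrable
  have hw1b : IntervalIntegrable w volume 1 b := (hwc.mono hsub2).intervalIntegrable
  constructor
  · exact hwa1.trans hw1b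
  -- the Gamma-type integrals
  have hGint : ∀ c : ℝ, 0 < c →
      IntegrableOn (fun t : ℝ => t ^ (ν-1) * Real.exp (-(c * t))) (Ioi (0:ℝ)) := by
    intro c hc
    have := integrableOn_rpow_mul_exp_neg_mul_rpow (show (-1:ℝ) < ν - 1 by linarith)
      (one_pos : (0:ℝ) < 1) hc
    apply this.congr_fun ?_ measurableSet_Ioi
    intro x hx
    simp only [Real.rpow_one, neg_mul]
  have hGval : ∀ c : ℝ, 0 < c →
      ∫ t in Ioi (0:ℝ), t ^ (ν-1) * Real.exp (-(c * t)) = (1/c) ^ ν * Real.Gamma ν :=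
    fun c hc => Real.integral_rpow_mul_exp_neg_mul_Ioi hν0 hc
  have hGnn : ∀ (c : ℝ), ∀ᵐ t ∂(volume.restrict (Ioi (0:ℝ))),
      0 ≤ t ^ (ν-1) * Real.exp (-(c * t)) := by
    intro c
    filter_upwards [ae_restrict_mem measurableSet_Ioi] with t ht
    exact mul_nonneg (Real.rpow_nonneg (le_of_lt ht) _) (Real.exp_pos _).le
  -- generic bound for ∫_0^L of exp(-(c t)) |t|^{ν-1}
  have key : ∀ c L : ℝ, 0 < c → 0 ≤ L →
      (∫ t in (0:ℝ)..L, Real.exp (-(c * t)) * |t| ^ (ν-1)) ≤ (1/c) ^ ν * Real.Gamma ν := by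
    intro c L hc hL
    rw [intervalIntegral.integral_of_le hL]
    have step1 : ∫ t in Ioc (0:ℝ) L, Real.exp (-(c * t)) * |t| ^ (ν-1) =
        ∫ t in Ioc (0:ℝ) L, t ^ (ν-1) * Real.exp (-(c * t)) := by
      apply setIntegral_congr_fun measurableSet_Ioc
      intro t ht
      show Real.exp (-(c * t)) * |t| ^ (ν-1) = t ^ (ν-1) * Real.exp (-(c * t))
      rw [_root_.abs_of_pos ht.1, mul_comm]
    rw [step1, ← hGval c hc]
    exact setIntegral_mono_set (hGint c hc) (hGnn c) (Ioc_subset_Ioi_self).eventuallyLE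
  -- split the integral
  rw [← intervalIntegral.integral_add_adjacent_intervals hwa1 hw1b]
  -- piece 1
  have piece1 : (∫ r in a..(1:ℝ), w r) ≤ (1/a^(ν-1)) * ((1/(n:ℝ)) ^ ν * Real.Gamma ν) := by
    set g : ℝ → ℝ := fun r => Real.exp (-((n:ℝ) * (1 - r))) * |1 - r| ^ (ν-1) / a ^ (ν-1)
      with hg_def
    have hgc : Continuous g := by
      apply Continuous.div_const
      exact (Real.continuous_exp.comp ((continuous_const.mul
        (continuous_const.sub continuous_id)).neg)).mul
        ((cont_rpow_const' hp).comp (continuous_const.sub continuous_id).abs)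
    have hmono : ∀ r ∈ Icc a 1, w r ≤ g r := by
      intro r hr
      have hr0 : 0 < r := lt_of_lt_of_le ha hr.1
      have hlr : Real.log r ≤ 0 := Real.log_nonpos hr0.le hr.2
      have habs : |Real.log r| = -Real.log r := abs_of_nonpos hlr
      have k1 : 1 - r ≤ -Real.log r := by
        have := Real.log_le_sub_one_of_pos hr0; linarith
      have k2 : -Real.log r ≤ (1 - r) / a := by
        have h5 := Real.log_le_sub_one_of_pos (inv_pos.2 hr0)
        rw [Real.log_inv] at h5
        have h6 : r⁻¹ - 1 = (1 - r) / r := by field_simp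
        rw [h6] at h5
        exact h5.trans (div_le_div_of_nonneg_left (by linarith [hr.2]) ha (hr.1))
      have e1 : Real.exp (-(n:ℝ) * |Real.log r|) ≤ Real.exp (-((n:ℝ) * (1 - r))) := by
        apply Real.exp_le_exp.2
        rw [habs]
        nlinarith
      have e2 : |Real.log r| ^ (ν-1) ≤ ((1-r)/a) ^ (ν-1) := by
        apply Real.rpow_le_rpow (abs_nonneg _) _ hp
        rw [habs]; exact k2
      have e3 : ((1-r)/a) ^ (ν-1) = |1 - r| ^ (ν-1) / a ^ (ν-1) := by
        rw [Real.div_rpow (by linarith [hr.2]) ha.le,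
          _root_.abs_of_nonneg (by linarith [hr.2] : (0:ℝ) ≤ 1 - r)]
      calc w r = r * Real.exp (-(n:ℝ) * |Real.log r|) * |Real.log r| ^ (ν-1) := rfl
        _ ≤ 1 * Real.exp (-((n:ℝ) * (1 - r))) * (((1-r)/a) ^ (ν-1)) := by
            apply mul_le_mul _ e2 (by positivity) (by positivity)
            exact mul_le_mul hr.2 e1 (Real.exp_pos _).le one_pos.le
        _ = g r := by simp only [hg_def]; rw [one_mul, e3]; ring
    calc (∫ r in a..(1:ℝ), w r) ≤ ∫ r in a..(1:ℝ), g r :=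
          intervalIntegral.integral_mono_on ha1.le hwa1 (hgc.intervalIntegrable _ _) hmono
      _ = (∫ r in a..(1:ℝ), Real.exp (-((n:ℝ) * (1 - r))) * |1 - r| ^ (ν-1)) / a ^ (ν-1) := by
          rw [hg_def]
          exact intervalIntegral.integral_div _ _
      _ = (∫ t in (0:ℝ)..(1-a), Real.exp (-((n:ℝ) * t)) * |t| ^ (ν-1)) / a ^ (ν-1) := by
          rw [intervalIntegral.integral_comp_sub_left
            (fun t => Real.exp (-((n:ℝ) * t)) * |t| ^ (ν-1)) 1]
          norm_num
      _ ≤ ((1/(n:ℝ)) ^ ν * Real.Gamma ν) / a ^ (ν-1) := by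
          have hkey := key (n:ℝ) (1-a) hn0 (by linarith)
          have hpow : (0:ℝ) < a ^ (ν-1) := Real.rpow_pos_of_pos ha _
          gcongr
      _ = (1/a^(ν-1)) * ((1/(n:ℝ)) ^ ν * Real.Gamma ν) := by ring
  -- piece 2
  have piece2 : (∫ r in (1:ℝ)..b, w r) ≤ b * ((b/(n:ℝ)) ^ ν * Real.Gamma ν) := by
    set g : ℝ → ℝ := fun r => b * (Real.exp (-((n:ℝ)/b * (r - 1))) * |r - 1| ^ (ν-1))
      with hg_def
    have hgc : Continuous g := by
      apply Continuous.mul continuous_const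
      exact (Real.continuous_exp.comp ((continuous_const.mul
        (continuous_id.sub continuous_const)).neg)).mul
        ((cont_rpow_const' hp).comp (continuous_id.sub continuous_const).abs)
    have hmono : ∀ r ∈ Icc (1:ℝ) b, w r ≤ g r := by
      intro r hr
      have hr0 : (0:ℝ) < r := lt_of_lt_of_le one_pos hr.1
      have hlr : 0 ≤ Real.log r := Real.log_nonneg hr.1
      have habs : |Real.log r| = Real.log r := _root_.abs_of_nonneg hlr
      have k1 : (r - 1) / b ≤ Real.log r := by
        have h5 := Real.log_le_sub_one_of_pos (inv_pos.2 hr0)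
        rw [Real.log_inv] at h5
        have h6 : r⁻¹ - 1 = -((r - 1) / r) := by field_simp; ring
        rw [h6] at h5
        have h7 : (r - 1) / r ≤ Real.log r := by linarith
        refine le_trans ?_ h7
        exact div_le_div_of_nonneg_left (by linarith [hr.1]) hr0 hr.2
      have k2 : Real.log r ≤ r - 1 := by
        have := Real.log_le_sub_one_of_pos hr0; linarith
      have e1 : Real.exp (-(n:ℝ) * |Real.log r|) ≤ Real.exp (-((n:ℝ)/b * (r - 1))) := by
        apply Real.exp_le_exp.2
        rw [habs]
        rw [neg_mul, neg_le_neg_iff, div_mul_eq_mul_div, div_le_iff₀ hb]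
        calc (n:ℝ) * (r - 1) = (n:ℝ) * ((r-1)/b) * b := by field_simp
          _ ≤ (n:ℝ) * Real.log r * b := by
              apply mul_le_mul_of_nonneg_right _ hb.le
              exact mul_le_mul_of_nonneg_left k1 hn0.le
      have e2 : |Real.log r| ^ (ν-1) ≤ |r - 1| ^ (ν-1) := by
        apply Real.rpow_le_rpow (abs_nonneg _) _ hp
        rw [habs, _root_.abs_of_nonneg (by linarith [hr.1] : (0:ℝ) ≤ r - 1)]
        exact k2
      calc w r = r * Real.exp (-(n:ℝ) * |Real.log r|) * |Real.log r| ^ (ν-1) := rfl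
        _ ≤ b * Real.exp (-((n:ℝ)/b * (r - 1))) * (|r - 1| ^ (ν-1)) := by
            apply mul_le_mul _ e2 (by positivity) (by positivity)
            exact mul_le_mul hr.2 e1 (Real.exp_pos _).le hb.le
        _ = g r := by rw [hg_def]; ring
    calc (∫ r in (1:ℝ)..b, w r) ≤ ∫ r in (1:ℝ)..b, g r :=
          intervalIntegral.integral_mono_on hb1.le hw1b (hgc.intervalIntegrable _ _) hmono
      _ = b * ∫ r in (1:ℝ)..b, Real.exp (-((n:ℝ)/b * (r - 1))) * |r - 1| ^ (ν-1) := by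
          rw [hg_def]
          exact intervalIntegral.integral_const_mul _ _
      _ = b * ∫ t in (0:ℝ)..(b-1), Real.exp (-((n:ℝ)/b * t)) * |t| ^ (ν-1) := by
          rw [intervalIntegral.integral_comp_sub_right
            (fun t => Real.exp (-((n:ℝ)/b * t)) * |t| ^ (ν-1)) 1]
          norm_num
      _ ≤ b * ((1/((n:ℝ)/b)) ^ ν * Real.Gamma ν) := by
          apply mul_le_mul_of_nonneg_left _ hb.le
          exact key ((n:ℝ)/b) (b-1) (by positivity) (by linarith)
      _ = b * ((b/(n:ℝ)) ^ ν * Real.Gamma ν) := by rw [one_div_div]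
  have hfin : (1/a^(ν-1)) * ((1/(n:ℝ)) ^ ν * Real.Gamma ν) + b * ((b/(n:ℝ)) ^ ν * Real.Gamma ν)
      = (Real.Gamma ν / a ^ (ν-1) + Real.Gamma ν * b * b ^ ν) / (n:ℝ) ^ ν := by
    rw [Real.div_rpow hb.le hn0.le, Real.div_rpow one_pos.le hn0.le, Real.one_rpow]
    field_simp
  linarith [piece1, piece2]

set_option maxHeartbeats 1000000 in
lemma innerB (a b : ℝ) (ha : 0 < a) (hb : 0 < b) :
    ∃ C : ℝ, 0 < C ∧ ∀ r : ℝ, ∀ z : ℂ, a ≤ r → r ≤ b → r ≠ ‖z‖ →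
      (∫ θ in (-π)..π, 1 / ‖(r : ℂ) * Complex.exp (Complex.I * θ) - z‖) ≤
        C * (1 - Real.log (min |r - ‖z‖| 1)) := by
  have hπ := Real.pi_pos
  have hL : 0 ≤ Real.log (1 + 8*b) := Real.log_nonneg (by linarith)
  refine ⟨(10*π/a) * (1 + Real.log (1 + 8*b)), by positivity, fun r z har hrb hne => ?_⟩
  have hr0 : 0 < r := lt_of_lt_of_le ha har
  set s : ℝ := ‖z‖ with hs_def
  set A : ℝ := |r - s| with hA_def
  have hA : 0 < A := abs_pos.2 (sub_ne_zero.2 hne)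
  set φ : ℝ := z.arg with hφ_def
  have hφ1 : -π < φ := Complex.neg_pi_lt_arg z
  have hφ2 : φ ≤ π := Complex.arg_le_pi z
  set c : ℝ := 2 * r / π with hc_def
  have hc : 0 < c := by positivity
  have hca : 2 * a / π ≤ c := by
    rw [hc_def]; gcongr
  have hcb : c ≤ 2 * b / π := by
    rw [hc_def]; gcongr
  set m : ℝ := -Real.log (min A 1) with hm_def
  have hm : 0 ≤ m := by
    rw [hm_def, neg_nonneg]
    exact Real.log_nonpos (le_min hA.le one_pos.le) (min_le_right _ _)
  set L : ℝ := Real.log (1 + 8*b) with hL_def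
  set F : ℝ → ℝ := fun u => 2 / (A + r * |Real.sin u|) with hF_def
  have hFden : ∀ u : ℝ, 0 < A + r * |Real.sin u| := by
    intro u
    have : 0 ≤ r * |Real.sin u| := by positivity
    linarith
  have hFc : Continuous F :=
    continuous_const.div
      (continuous_const.add (continuous_const.mul (Real.continuous_sin.abs)))
      (fun u => (hFden u).ne')
  have hFnn : ∀ u, 0 ≤ F u := fun u => by positivity
  -- Step 1: J ≤ ∫ θ in -π..π, F (θ - φ)
  have step1 : (∫ θ in (-π)..π, 1 / ‖(r : ℂ) * Complex.exp (Complex.I * θ) - z‖) ≤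
      ∫ θ in (-π)..π, F (θ - φ) := by
    apply helper_le_intervalIntegral (by linarith)
    · exact ((hFc.comp (continuous_id.sub continuous_const)).intervalIntegrable _ _)
    · intro x _; positivity
    · apply Filter.Eventually.of_forall
      intro θ
      have g1 := norm_ge_abs_sub r hr0.le θ z
      have g2 := norm_ge_sin r hr0.le θ z
      have hden : (A + r * |Real.sin (θ - φ)|) / 2 ≤ ‖(r : ℂ) * Complex.exp (Complex.I * θ) - z‖ := by
        rcases le_total A (r * |Real.sin (θ - φ)|) with h | h
        · have := g2; rw [← hφ_def] at this; linarith
        · have := g1; rw [← hs_def, ← hA_def] at this; linarith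
      have hnorm : 0 < ‖(r : ℂ) * Complex.exp (Complex.I * θ) - z‖ :=
        lt_of_lt_of_le (by linarith [hFden (θ - φ)]) hden
      rw [hF_def]
      calc 1 / ‖(r : ℂ) * Complex.exp (Complex.I * θ) - z‖ ≤
            1 / ((A + r * |Real.sin (θ - φ)|) / 2) :=
          one_div_le_one_div_of_le (by linarith [hFden (θ - φ)]) hden
        _ = 2 / (A + r * |Real.sin (θ - φ)|) := by
            rw [div_div_eq_mul_div, one_mul]
  -- Step 2: shift
  have step2 : (∫ θ in (-π)..π, F (θ - φ)) = ∫ u in (-π - φ)..(π - φ), F u :=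
    intervalIntegral.integral_comp_sub_right F φ
  -- Step 3: enlarge to [-2π, 2π]
  have hFint : IntegrableOn F (Ioc (-(2*π)) (2*π)) volume := by
    have h0 : IntervalIntegrable F volume (-(2*π)) (2*π) := hFc.intervalIntegrable _ _
    exact h0.1
  have step3 : (∫ u in (-π - φ)..(π - φ), F u) ≤ ∫ u in Ioc (-(2*π)) (2*π), F u := by
    rw [intervalIntegral.integral_of_le (by linarith)]
    apply setIntegral_mono_set hFint
      (Filter.Eventually.of_forall fun u => hFnn u)
    apply Filter.Eventually.of_forall
    exact fun u hu => Ioc_subset_Ioc (by linarith) (by linarith) hu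
  -- the comparison functions
  set H : ℤ → ℝ → ℝ := fun j u => 2 / (c * |u - j * π| + A) with hH_def
  have hHden : ∀ (j : ℤ) (u : ℝ), 0 < c * |u - j * π| + A := by
    intro j u
    have : 0 ≤ c * |u - j * π| := by positivity
    linarith
  have hHc : ∀ j : ℤ, Continuous (H j) := by
    intro j
    exact continuous_const.div
      ((continuous_const.mul ((continuous_id.sub continuous_const).abs)).add continuous_const)
      (fun u => (hHden j u).ne')
  have hHnn : ∀ (j : ℤ) (u : ℝ), 0 ≤ H j u := by
    intro j u
    rw [hH_def]
    positivity
  -- Step 4: pointwise F ≤ sum of H j on Ioc(-2π, 2π)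
  have step4 : ∀ u ∈ Ioc (-(2*π)) (2*π), F u ≤ ∑ j ∈ Finset.Icc (-2:ℤ) 2, H j u := by
    intro u hu
    set k : ℤ := round (u / π) with hk_def
    have hround : |u / π - k| ≤ 1/2 := abs_sub_round (u / π)
    have hk2 : |u - k * π| ≤ π / 2 := by
      have heq : u - k * π = (u / π - k) * π := by field_simp
      rw [heq, abs_mul, abs_of_pos hπ]
      calc |u / π - k| * π ≤ (1/2) * π := by gcongr
        _ = π / 2 := by ring
    have hkabs : |(k : ℝ)| ≤ 5/2 := by
      have h1 : |u / π| ≤ 2 := by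
        rw [abs_div, abs_of_pos hπ, div_le_iff₀ hπ]
        rw [abs_le]; constructor <;> [linarith [hu.1]; linarith [hu.2]]
      calc |(k:ℝ)| = |u/π - (u/π - k)| := by ring_nf
        _ ≤ |u/π| + |u/π - k| := abs_sub _ _
        _ ≤ 2 + 1/2 := by gcongr
        _ = 5/2 := by norm_num
    have hkmem : k ∈ Finset.Icc (-2:ℤ) 2 := by
      rw [Finset.mem_Icc]
      have h1 : (k:ℝ) ≤ 5/2 := (abs_le.1 hkabs).2
      have h2 : (-5/2 : ℝ) ≤ (k:ℝ) := by linarith [(abs_le.1 hkabs).1]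
      have h3 : k < 3 := by exact_mod_cast h1.trans_lt (by norm_num : (5/2:ℝ) < 3)
      have h4 : (-3:ℤ) < k := by
        have : (-3:ℝ) < (k:ℝ) := by linarith
        exact_mod_cast this
      omega
    have hsin : 2/π * |u - k*π| ≤ |Real.sin u| := by
      have e := Real.sin_add_int_mul_pi (u - k*π) k
      rw [sub_add_cancel] at e
      have habs1 : |((-1:ℝ)^k)| = 1 := by
        rcases Int.even_or_odd k with hk | hk
        · rw [hk.neg_one_zpow, abs_one]
        · rw [hk.neg_one_zpow, abs_neg, abs_one]
      have e2 : |Real.sin u| = |Real.sin (u - k*π)| := by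
        rw [e, abs_mul, habs1, one_mul]
      rw [e2]
      exact jordan_abs hk2
    have hFH : F u ≤ H k u := by
      rw [hF_def, hH_def]
      apply div_le_div_of_nonneg_left (by norm_num) (hHden k u)
      have h5 : c * |u - k*π| ≤ r * |Real.sin u| := by
        calc c * |u - k*π| = r * (2/π * |u - k*π|) := by rw [hc_def]; ring
          _ ≤ r * |Real.sin u| := mul_le_mul_of_nonneg_left hsin hr0.le
      linarith
    exact hFH.trans (Finset.single_le_sum (fun j _ => hHnn j u) hkmem)
  -- integrability of H j on the big interval
  have hHint : ∀ j : ℤ, IntegrableOn (H j) (Ioc (-(2*π)) (2*π)) volume := by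
    intro j
    have h0 : IntervalIntegrable (H j) volume (-(2*π)) (2*π) := (hHc j).intervalIntegrable _ _
    exact h0.1
  have step5 : (∫ u in Ioc (-(2*π)) (2*π), F u) ≤
      ∑ j ∈ Finset.Icc (-2:ℤ) 2, ∫ u in Ioc (-(2*π)) (2*π), H j u := by
    rw [← MeasureTheory.integral_finset_sum]
    · exact setIntegral_mono_on hFint
        (integrable_finset_sum _ (fun j _ => hHint j)) measurableSet_Ioc step4
    · exact fun j _ => hHint j
  have step6 : ∀ j ∈ Finset.Icc (-2:ℤ) 2,
      (∫ u in Ioc (-(2*π)) (2*π), H j u) ≤ 4 / c * (L + m) := by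
    intro j hj
    rw [Finset.mem_Icc] at hj
    have hj1 : (-2:ℝ) ≤ (j:ℝ) := by exact_mod_cast hj.1
    have hj2 : (j:ℝ) ≤ 2 := by exact_mod_cast hj.2
    set G : ℝ → ℝ := fun v => 2 / (c * |v| + A) with hG_def
    have hGden : ∀ v : ℝ, 0 < c * |v| + A := by
      intro v
      have : 0 ≤ c * |v| := by positivity
      linarith
    have hGc : Continuous G := continuous_const.div
      ((continuous_const.mul _root_.continuous_abs).add continuous_const)
      (fun v => (hGden v).ne')
    have hGnn : ∀ v, 0 ≤ G v := fun v => div_nonneg (by norm_num) (hGden v).le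
    have hGint : IntegrableOn G (Ioc (-(4*π)) (4*π)) volume := by
      have h0 : IntervalIntegrable G volume (-(4*π)) (4*π) := hGc.intervalIntegrable _ _
      exact h0.1
    have e2 : (∫ u in Ioc (-(2*π)) (2*π), H j u) = ∫ v in (-(2*π) - j*π)..(2*π - j*π), G v := by
      rw [← intervalIntegral.integral_comp_sub_right G (j*π),
        intervalIntegral.integral_of_le (by linarith)]
    have e3 : (∫ v in (-(2*π) - j*π)..(2*π - j*π), G v) ≤ ∫ v in Ioc (-(4*π)) (4*π), G v := by
      rw [intervalIntegral.integral_of_le (by linarith)]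
      apply setIntegral_mono_set hGint (Filter.Eventually.of_forall hGnn)
      apply Filter.Eventually.of_forall
      refine fun v hv => Ioc_subset_Ioc ?_ ?_ hv
      · nlinarith
      · nlinarith
    have e4 : (∫ v in Ioc (-(4*π)) (4*π), G v) = 2 * ∫ v in (0:ℝ)..(4*π), G v := by
      rw [← intervalIntegral.integral_of_le (by linarith)]
      have neg_part : (∫ v in (-(4*π))..(0:ℝ), G v) = ∫ v in (0:ℝ)..(4*π), G v := by
        have h5 := intervalIntegral.integral_comp_neg (a := (0:ℝ)) (b := 4*π) (f := G)
        simp only [hG_def, abs_neg, neg_zero] at h5 ⊢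
        rw [← h5]
      rw [← intervalIntegral.integral_add_adjacent_intervals
        ((hGc.intervalIntegrable (-(4*π)) 0)) ((hGc.intervalIntegrable 0 (4*π))), neg_part]
      ring
    have e5 : (∫ v in (0:ℝ)..(4*π), G v) = 2 * (c⁻¹ * Real.log ((c*(4*π)+A)/A)) := by
      have congr1 : (∫ v in (0:ℝ)..(4*π), G v) =
          ∫ v in (0:ℝ)..(4*π), 2 * ((fun x : ℝ => 1/x) (c*v + A)) := by
        apply intervalIntegral.integral_congr
        intro v hv
        rw [uIcc_of_le (by linarith : (0:ℝ) ≤ 4*π)] at hv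
        show 2 / (c * |v| + A) = 2 * (1/(c*v + A))
        rw [_root_.abs_of_nonneg hv.1]
        ring
      have h4c : (0:ℝ) ≤ c*(4*π) := mul_nonneg hc.le (by positivity)
      have h0ne : (0:ℝ) ∉ uIcc A (c*(4*π)+A) := by
        rw [uIcc_of_le (le_add_of_nonneg_left h4c)]
        intro hmem
        exact absurd hmem.1 (by linarith)
      rw [congr1, intervalIntegral.integral_const_mul]
      rw [intervalIntegral.integral_comp_mul_add (fun x : ℝ => 1/x) hc.ne' A]
      rw [smul_eq_mul, mul_zero, zero_add, integral_one_div h0ne]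
    have e6 : Real.log ((c*(4*π)+A)/A) ≤ L + m := by
      have h4c : (0:ℝ) ≤ c*(4*π) := mul_nonneg hc.le (by positivity)
      have hpos : 0 < c*(4*π)+A := add_pos_of_nonneg_of_pos h4c hA
      have h8r : c * (4*π) = 8 * r := by rw [hc_def]; field_simp; ring
      rw [Real.log_div hpos.ne' hA.ne']
      rcases le_total A 1 with hA1 | hA1
      · have hmin : min A 1 = A := min_eq_left hA1
        have : Real.log (c*(4*π)+A) ≤ L := by
          rw [hL_def]
          apply Real.log_le_log hpos
          rw [h8r]
          linarith
        rw [hm_def, hmin]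
        linarith
      · have hmin : min A 1 = 1 := min_eq_right hA1
        have hm0 : m = 0 := by rw [hm_def, hmin, Real.log_one, neg_zero]
        rw [hm0, add_zero, ← Real.log_div hpos.ne' hA.ne', hL_def]
        apply Real.log_le_log (by positivity)
        rw [div_le_iff₀ hA]
        rw [h8r]
        have k1 : (8:ℝ)*r ≤ 8*b := by linarith
        have k2 : (0:ℝ) ≤ 8*b*(A-1) := mul_nonneg (by linarith) (by linarith)
        have k3 : (1+8*b)*A = A + 8*b*(A-1) + 8*b := by ring
        linarith [k1, k2, k3]
    calc (∫ u in Ioc (-(2*π)) (2*π), H j u) ≤ ∫ v in Ioc (-(4*π)) (4*π), G v := by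
          rw [e2]; exact e3
      _ = 4 * (c⁻¹ * Real.log ((c*(4*π)+A)/A)) := by rw [e4, e5]; ring
      _ ≤ 4 * (c⁻¹ * (L + m)) := by
          apply mul_le_mul_of_nonneg_left _ (by norm_num)
          exact mul_le_mul_of_nonneg_left e6 (by positivity)
      _ = 4 / c * (L + m) := by ring
  have hsum : (∑ j ∈ Finset.Icc (-2:ℤ) 2, ∫ u in Ioc (-(2*π)) (2*π), H j u) ≤
      5 * (4/c * (L+m)) := by
    have hcard : (Finset.Icc (-2:ℤ) 2).card = 5 := by decide
    calc (∑ j ∈ Finset.Icc (-2:ℤ) 2, ∫ u in Ioc (-(2*π)) (2*π), H j u) ≤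
        ∑ _j ∈ Finset.Icc (-2:ℤ) 2, 4/c * (L+m) := Finset.sum_le_sum step6
      _ = 5 * (4/c*(L+m)) := by rw [Finset.sum_const, hcard]; simp [nsmul_eq_mul]
  have hfinal : 5 * (4/c * (L+m)) ≤ (10*π/a) * (1 + L) * (1 - Real.log (min A 1)) := by
    have h3 : 1 - Real.log (min A 1) = 1 + m := by rw [hm_def]; ring
    have h2 : 20/c ≤ 10*π/a := by
      rw [div_le_div_iff₀ hc ha]
      calc (20:ℝ) * a = 10 * π * (2*a/π) := by field_simp; ring
        _ ≤ 10 * π * c := by gcongr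
    rw [h3]
    have h4 : 5 * (4/c * (L+m)) = 20/c * (L+m) := by ring
    rw [h4]
    have h5 : 20/c*(L+m) ≤ (10*π/a)*(L+m) := mul_le_mul_of_nonneg_right h2 (by linarith)
    refine h5.trans ?_
    have expand : (10*π/a)*(1+L)*(1+m) = (10*π/a)*(1 + (L + m + L*m)) := by ring
    rw [expand]
    have h9 : (0:ℝ) ≤ 10*π/a := div_nonneg (by positivity) ha.le
    apply mul_le_mul_of_nonneg_left _ h9
    linarith [mul_nonneg hL hm]
  calc (∫ θ in (-π)..π, 1 / ‖(r : ℂ) * Complex.exp (Complex.I * θ) - z‖) ≤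
        ∫ θ in (-π)..π, F (θ - φ) := step1
    _ = ∫ u in (-π - φ)..(π - φ), F u := step2
    _ ≤ ∫ u in Ioc (-(2*π)) (2*π), F u := step3
    _ ≤ ∑ j ∈ Finset.Icc (-2:ℤ) 2, ∫ u in Ioc (-(2*π)) (2*π), H j u := step5
    _ ≤ 5 * (4/c * (L+m)) := hsum
    _ ≤ (10*π/a) * (1 + L) * (1 - Real.log (min A 1)) := hfinal


/-- key Laplace-type estimate: for fixed `ε > 0` and `ν ≥ 1`:
(i) there is `K > 0` with, for all large `n` and all `z ∈ ℂ`,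
`∫_{2^{-ε}}^{2^{ε}} r' e^{-n|log r'|} |log r'|^{ν-1} (∫_{-π}^{π} dθ'/|r'e^{iθ'} - z|) dr'
  ≤ K log n / n^ν`;
(ii) for each `ρ > 2^ε` there is `K' > 0` with the same integral `≤ K'/n^ν` for all large `n`
whenever `|log|z|| ≥ log ρ` (stated equivalently as `‖z‖ ≤ ρ⁻¹ ∨ ρ ≤ ‖z‖`). -/
theorem stmt11 (ε ν : ℝ) (hε : 0 < ε) (hν : 1 ≤ ν) :
    (∃ K > (0 : ℝ), ∀ᶠ n : ℕ in atTop, ∀ z : ℂ,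
      (∫ r' in ((2 : ℝ) ^ (-ε))..((2 : ℝ) ^ ε),
          r' * Real.exp (-(n : ℝ) * |Real.log r'|) * |Real.log r'| ^ (ν - 1) *
            ∫ θ' in (-π)..π, 1 / ‖(r' : ℂ) * Complex.exp (Complex.I * θ') - z‖)
        ≤ K * Real.log n / (n : ℝ) ^ ν) ∧
    (∀ ρ : ℝ, (2 : ℝ) ^ ε < ρ →
      ∃ K' > (0 : ℝ), ∀ᶠ n : ℕ in atTop, ∀ z : ℂ, (‖z‖ ≤ ρ⁻¹ ∨ ρ ≤ ‖z‖) →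
        (∫ r' in ((2 : ℝ) ^ (-ε))..((2 : ℝ) ^ ε),
            r' * Real.exp (-(n : ℝ) * |Real.log r'|) * |Real.log r'| ^ (ν - 1) *
              ∫ θ' in (-π)..π, 1 / ‖(r' : ℂ) * Complex.exp (Complex.I * θ') - z‖)
          ≤ K' / (n : ℝ) ^ ν) := by
  have hπ := Real.pi_pos
  obtain ⟨CA, hCA, houterA⟩ := outerA ε ν hε hν
  have ha : (0:ℝ) < (2:ℝ) ^ (-ε) := Real.rpow_pos_of_pos two_pos _
  have hb : (0:ℝ) < (2:ℝ) ^ ε := Real.rpow_pos_of_pos two_pos _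
  have ha1 : (2:ℝ) ^ (-ε) < 1 := Real.rpow_lt_one_of_one_lt_of_neg one_lt_two (by linarith)
  have hb1 : (1:ℝ) < (2:ℝ) ^ ε := by
    have := Real.rpow_lt_rpow_of_exponent_lt one_lt_two (show (0:ℝ) < ε from hε)
    rwa [Real.rpow_zero] at this
  have hab : (2:ℝ) ^ (-ε) ≤ (2:ℝ) ^ ε := by linarith
  obtain ⟨CB, hCB, hinner⟩ := innerB ((2:ℝ) ^ (-ε)) ((2:ℝ) ^ ε) ha hb
  -- nonnegativity of w and J
  have hw0 : ∀ n : ℕ, ∀ x : ℝ, 0 < x →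
      0 ≤ x * Real.exp (-(n : ℝ) * |Real.log x|) * |Real.log x| ^ (ν - 1) := by
    intro n x hx0
    have h1 : (0:ℝ) ≤ |Real.log x| ^ (ν - 1) := Real.rpow_nonneg (abs_nonneg _) _
    positivity
  have hJ0 : ∀ (x : ℝ) (z : ℂ),
      0 ≤ ∫ θ' in (-π)..π, 1 / ‖(x : ℂ) * Complex.exp (Complex.I * θ') - z‖ := by
    intro x z
    apply intervalIntegral.integral_nonneg (by linarith)
    intro u _
    positivity
  constructor
  · -- part (i)
    obtain ⟨cs, hcs, hsup⟩ := exp_mul_rpow_le (show (0:ℝ) ≤ ν - 1 by linarith)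
    refine ⟨CB * (2*CA + 8 * (2:ℝ)^ε * cs), by positivity, ?_⟩
    rw [Filter.eventually_atTop]
    refine ⟨3, fun n hn z => ?_⟩
    have hn1 : 1 ≤ n := le_trans (by norm_num) hn
    have hn0 : (0:ℝ) < n := by exact_mod_cast hn1
    have hn3 : (3:ℝ) ≤ n := by exact_mod_cast hn
    have hlogn : 1 ≤ Real.log n := by
      rw [Real.le_log_iff_exp_le hn0]
      calc Real.exp 1 ≤ 2.7182818286 := Real.exp_one_lt_d9.le
        _ ≤ 3 := by norm_num
        _ ≤ (n:ℝ) := hn3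
    have hNpos : (0:ℝ) < (n:ℝ) ^ ν := Real.rpow_pos_of_pos hn0 _
    have hNpos' : (0:ℝ) < (n:ℝ) ^ (ν-1) := Real.rpow_pos_of_pos hn0 _
    set s : ℝ := ‖z‖ with hs_def
    have hsup' : ∀ t : ℝ, 0 ≤ t →
        Real.exp (-(n:ℝ) * t) * t ^ (ν-1) ≤ cs / (n:ℝ)^(ν-1) := by
      intro t ht
      have h1 := hsup ((n:ℝ)*t) (by positivity)
      rw [Real.mul_rpow hn0.le ht] at h1
      rw [le_div_iff₀ hNpos']
      calc Real.exp (-(n:ℝ) * t) * t ^ (ν-1) * (n:ℝ)^(ν-1)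
          = (n:ℝ)^(ν-1) * t^(ν-1) * Real.exp (-((n:ℝ)*t)) := by rw [neg_mul]; ring
        _ ≤ cs := h1
    set Sn : ℝ := (2:ℝ)^ε * (cs / (n:ℝ)^(ν-1)) with hSn_def
    have hSn0 : 0 ≤ Sn := by positivity
    have hwS : ∀ x ∈ Set.Icc ((2:ℝ)^(-ε)) ((2:ℝ)^ε),
        x * Real.exp (-(n : ℝ) * |Real.log x|) * |Real.log x| ^ (ν - 1) ≤ Sn := by
      intro x hx
      calc x * Real.exp (-(n : ℝ) * |Real.log x|) * |Real.log x| ^ (ν - 1)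
          = x * (Real.exp (-(n : ℝ) * |Real.log x|) * |Real.log x| ^ (ν - 1)) := by ring
        _ ≤ (2:ℝ)^ε * (cs / (n:ℝ)^(ν-1)) := by
            apply mul_le_mul hx.2 (hsup' _ (abs_nonneg _)) ?_ hb.le
            exact mul_nonneg (Real.exp_pos _).le (Real.rpow_nonneg (abs_nonneg _) _)
    set g : ℝ → ℝ := fun t => 2 * (n:ℝ)^(-(1/2) : ℝ) * |t - s| ^ (-(1/2) : ℝ) with hg_def
    set P : ℝ → ℝ := Set.indicator (Set.Ioo (-(1/(n:ℝ)) + s) (1/(n:ℝ) + s)) g with hP_def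
    have hg0 : ∀ t, 0 ≤ g t := fun t =>
      mul_nonneg (by positivity) (Real.rpow_nonneg (abs_nonneg _) _)
    have hP0 : ∀ t, 0 ≤ P t := fun t => Set.indicator_nonneg (fun u _ => hg0 u) t
    have hgii : IntervalIntegrable g volume (-(1/(n:ℝ)) + s) (1/(n:ℝ) + s) :=
      ((intInt_abs_rpow (-(1/(n:ℝ))) (1/(n:ℝ))).comp_sub_right s).const_mul _
    have hPint : Integrable P volume := by
      rw [hP_def, integrable_indicator_iff measurableSet_Ioo]
      exact (hgii.1).mono_set Set.Ioo_subset_Ioc_self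
    have hinvn : (0:ℝ) < 1/(n:ℝ) := by positivity
    have hPval : (∫ t, P t) = 8 / (n:ℝ) := by
      rw [hP_def, MeasureTheory.integral_indicator measurableSet_Ioo,
        ← MeasureTheory.integral_Ioc_eq_integral_Ioo,
        ← intervalIntegral.integral_of_le (by linarith : -(1/(n:ℝ)) + s ≤ 1/(n:ℝ) + s)]
      rw [hg_def]
      rw [intervalIntegral.integral_const_mul]
      have hshift := intervalIntegral.integral_comp_sub_right
        (fun t : ℝ => |t| ^ (-(1/2) : ℝ)) s (a := -(1/(n:ℝ)) + s) (b := 1/(n:ℝ) + s)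
      simp only [add_sub_cancel_right] at hshift
      rw [hshift, integral_abs_rpow hinvn.le]
      have e2 : (n:ℝ)^(-(1/2):ℝ) * (n:ℝ)^(-(1/2):ℝ) = ((n:ℝ))⁻¹ := by
        rw [← Real.rpow_add hn0]
        norm_num [Real.rpow_neg_one]
      have e1 : ((1:ℝ)/(n:ℝ))^((1/2):ℝ) = (n:ℝ)^(-(1/2):ℝ) := by
        rw [one_div, Real.inv_rpow hn0.le, ← Real.rpow_neg hn0.le]
      rw [e1]
      calc 2 * (n:ℝ)^(-(1/2):ℝ) * (4 * (n:ℝ)^(-(1/2):ℝ))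
          = 8 * ((n:ℝ)^(-(1/2):ℝ) * (n:ℝ)^(-(1/2):ℝ)) := by ring
        _ = 8 * ((n:ℝ))⁻¹ := by rw [e2]
        _ = 8 / (n:ℝ) := by rw [div_eq_mul_inv]
    have hPle : (∫ r' in ((2:ℝ)^(-ε))..((2:ℝ)^ε), P r') ≤ 8/(n:ℝ) := by
      rw [intervalIntegral.integral_of_le hab, ← hPval]
      exact setIntegral_le_integral hPint (Filter.Eventually.of_forall hP0)
    have hae_ne : ∀ᵐ (x:ℝ) ∂(volume.restrict (Set.Icc ((2:ℝ)^(-ε)) ((2:ℝ)^ε))), x ≠ s := by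
      apply MeasureTheory.ae_restrict_of_ae
      rw [MeasureTheory.ae_iff]
      simp only [not_not]
      have h9 : {x : ℝ | x = s} = {s} := Set.setOf_eq_eq_singleton
      rw [h9]
      exact measure_singleton s
    have hcomp : ∀ᵐ x ∂(volume.restrict (Set.Icc ((2:ℝ)^(-ε)) ((2:ℝ)^ε))),
        x * Real.exp (-(n : ℝ) * |Real.log x|) * |Real.log x| ^ (ν - 1) *
            (∫ θ' in (-π)..π, 1 / ‖(x : ℂ) * Complex.exp (Complex.I * θ') - z‖) ≤
          CB * ((1 + Real.log n) *
              (x * Real.exp (-(n : ℝ) * |Real.log x|) * |Real.log x| ^ (ν - 1)) + Sn * P x) := by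
      filter_upwards [hae_ne, ae_restrict_mem measurableSet_Icc] with x hxs hx
      have hx0 : 0 < x := lt_of_lt_of_le ha hx.1
      have hwx0 : 0 ≤ x * Real.exp (-(n : ℝ) * |Real.log x|) * |Real.log x| ^ (ν - 1) :=
        hw0 n x hx0
      have hwxS := hwS x hx
      have hJ := hinner x z hx.1 hx.2 (by rw [← hs_def]; exact hxs)
      rw [← hs_def] at hJ
      set q : ℝ := -Real.log (min |x - s| 1) with hq_def
      have hA : 0 < |x - s| := abs_pos.2 (sub_ne_zero.2 hxs)
      have hq0 : 0 ≤ q := by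
        rw [hq_def, neg_nonneg]
        exact Real.log_nonpos (le_min hA.le one_pos.le) (min_le_right _ _)
      set p : ℝ := max (q - Real.log n) 0 with hp_def
      have hp0 : (0:ℝ) ≤ p := le_max_right _ _
      have hqp : q ≤ Real.log n + p := by
        have := le_max_left (q - Real.log n) 0
        linarith
      have hpP : p ≤ P x := by
        rcases le_or_gt (1/(n:ℝ)) (min |x - s| 1) with hcase | hcase
        · have hq_le : q ≤ Real.log n := by
            rw [hq_def]
            have h1 : Real.log (1/(n:ℝ)) ≤ Real.log (min |x - s| 1) :=
              Real.log_le_log (by positivity) hcase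
            rw [one_div, Real.log_inv] at h1
            linarith
          have h2 : p = 0 := max_eq_right (by linarith)
          rw [h2]
          exact hP0 x
        · have hn_inv1 : 1/(n:ℝ) ≤ 1 := by
            rw [div_le_one hn0]; linarith
          have hAlt : |x - s| < 1/(n:ℝ) := by
            rcases min_cases |x - s| 1 with ⟨hmin, _⟩ | ⟨hmin, hle⟩
            · rwa [hmin] at hcase
            · rw [hmin] at hcase; linarith
          have hxmem : x ∈ Set.Ioo (-(1/(n:ℝ)) + s) (1/(n:ℝ) + s) := by
            rcases abs_sub_lt_iff.1 hAlt with ⟨h1, h2⟩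
            constructor
            · linarith
            · linarith
          have hPx : P x = g x := by rw [hP_def]; exact Set.indicator_of_mem hxmem g
          have hnA : 0 < (n:ℝ) * |x - s| := by positivity
          have hsq : 0 < Real.sqrt ((n:ℝ) * |x - s|) := Real.sqrt_pos.2 hnA
          have l1 : q - Real.log n ≤ 2 * (Real.sqrt ((n:ℝ) * |x - s|))⁻¹ := by
            have hminA : min |x - s| 1 = |x - s| := min_eq_left (by linarith)
            have e1 : q - Real.log n = -Real.log ((n:ℝ) * |x - s|) := by
              rw [hq_def, hminA, Real.log_mul hn0.ne' hA.ne']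
              ring
            have e2 : Real.log ((n:ℝ) * |x - s|) =
                2 * Real.log (Real.sqrt ((n:ℝ) * |x - s|)) := by
              rw [Real.log_sqrt hnA.le]; ring
            have e3 : Real.log ((Real.sqrt ((n:ℝ) * |x - s|))⁻¹) ≤
                (Real.sqrt ((n:ℝ) * |x - s|))⁻¹ - 1 :=
              Real.log_le_sub_one_of_pos (by positivity)
            rw [Real.log_inv] at e3
            rw [e1, e2]
            have := inv_pos.2 hsq
            linarith
          have l2 : (n:ℝ)^(-(1/2):ℝ) * |x - s| ^ (-(1/2):ℝ) =
              (Real.sqrt ((n:ℝ) * |x - s|))⁻¹ := by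
            rw [← Real.mul_rpow hn0.le (abs_nonneg _), Real.rpow_neg hnA.le,
              Real.sqrt_eq_rpow]
          have hgx : q - Real.log n ≤ g x := by
            rw [hg_def]
            calc q - Real.log n ≤ 2 * (Real.sqrt ((n:ℝ) * |x - s|))⁻¹ := l1
              _ = 2 * ((n:ℝ)^(-(1/2):ℝ) * |x - s| ^ (-(1/2):ℝ)) := by rw [l2]
              _ = 2 * (n:ℝ)^(-(1/2):ℝ) * |x - s| ^ (-(1/2):ℝ) := by ring
          rw [hPx, hp_def]
          exact max_le hgx (hg0 x)
      calc x * Real.exp (-(n : ℝ) * |Real.log x|) * |Real.log x| ^ (ν - 1) *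
              (∫ θ' in (-π)..π, 1 / ‖(x : ℂ) * Complex.exp (Complex.I * θ') - z‖) ≤
            x * Real.exp (-(n : ℝ) * |Real.log x|) * |Real.log x| ^ (ν - 1) *
              (CB * (1 - Real.log (min |x - s| 1))) :=
          mul_le_mul_of_nonneg_left hJ hwx0
        _ = CB * ((x * Real.exp (-(n : ℝ) * |Real.log x|) * |Real.log x| ^ (ν - 1)) * (1 + q)) := by
            rw [hq_def]; ring
        _ ≤ CB * ((x * Real.exp (-(n : ℝ) * |Real.log x|) * |Real.log x| ^ (ν - 1)) *
              (1 + (Real.log n + p))) := by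
            apply mul_le_mul_of_nonneg_left _ hCB.le
            apply mul_le_mul_of_nonneg_left _ hwx0
            linarith
        _ = CB * ((1 + Real.log n) *
              (x * Real.exp (-(n : ℝ) * |Real.log x|) * |Real.log x| ^ (ν - 1)) +
              (x * Real.exp (-(n : ℝ) * |Real.log x|) * |Real.log x| ^ (ν - 1)) * p) := by
            ring
        _ ≤ CB * ((1 + Real.log n) *
              (x * Real.exp (-(n : ℝ) * |Real.log x|) * |Real.log x| ^ (ν - 1)) + Sn * p) := by
            apply mul_le_mul_of_nonneg_left _ hCB.le
            have := mul_le_mul_of_nonneg_right hwxS hp0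
            linarith
        _ ≤ CB * ((1 + Real.log n) *
              (x * Real.exp (-(n : ℝ) * |Real.log x|) * |Real.log x| ^ (ν - 1)) + Sn * P x) := by
            apply mul_le_mul_of_nonneg_left _ hCB.le
            have := mul_le_mul_of_nonneg_left hpP hSn0
            linarith
    have hGint : IntervalIntegrable (fun x =>
        CB * ((1 + Real.log n) *
          (x * Real.exp (-(n : ℝ) * |Real.log x|) * |Real.log x| ^ (ν - 1)) + Sn * P x))
        volume ((2:ℝ)^(-ε)) ((2:ℝ)^ε) :=
      ((((houterA n hn1).1.const_mul (1 + Real.log n)).add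
        (hPint.intervalIntegrable.const_mul Sn)).const_mul CB)
    have main := helper_le_intervalIntegral hab hGint
      (fun x hx => mul_nonneg (hw0 n x (lt_trans ha hx.1)) (hJ0 x z)) hcomp
    have hGval : (∫ x in ((2:ℝ)^(-ε))..((2:ℝ)^ε),
        CB * ((1 + Real.log n) *
          (x * Real.exp (-(n : ℝ) * |Real.log x|) * |Real.log x| ^ (ν - 1)) + Sn * P x))
        = CB * ((1 + Real.log n) * (∫ x in ((2:ℝ)^(-ε))..((2:ℝ)^ε),
            x * Real.exp (-(n : ℝ) * |Real.log x|) * |Real.log x| ^ (ν - 1)) +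
          Sn * (∫ x in ((2:ℝ)^(-ε))..((2:ℝ)^ε), P x)) := by
      rw [intervalIntegral.integral_const_mul]
      congr 1
      rw [intervalIntegral.integral_add ((houterA n hn1).1.const_mul _)
        ((hPint.intervalIntegrable).const_mul _),
        intervalIntegral.integral_const_mul, intervalIntegral.integral_const_mul]
    have hwle := (houterA n hn1).2
    have hSn8 : Sn * (8/(n:ℝ)) = 8 * (2:ℝ)^ε * cs / (n:ℝ)^ν := by
      have hxx : (n:ℝ)^(ν-1) * (n:ℝ) = (n:ℝ)^ν := by
        nth_rewrite 2 [← Real.rpow_one (n:ℝ)]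
        rw [← Real.rpow_add hn0]
        norm_num
      rw [hSn_def]
      field_simp
      rw [← hxx]
    calc (∫ r' in ((2:ℝ)^(-ε))..((2:ℝ)^ε),
          r' * Real.exp (-(n : ℝ) * |Real.log r'|) * |Real.log r'| ^ (ν - 1) *
            ∫ θ' in (-π)..π, 1 / ‖(r' : ℂ) * Complex.exp (Complex.I * θ') - z‖) ≤
          ∫ x in ((2:ℝ)^(-ε))..((2:ℝ)^ε),
            CB * ((1 + Real.log n) *
              (x * Real.exp (-(n : ℝ) * |Real.log x|) * |Real.log x| ^ (ν - 1)) + Sn * P x) :=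
        main
      _ = CB * ((1 + Real.log n) * (∫ x in ((2:ℝ)^(-ε))..((2:ℝ)^ε),
            x * Real.exp (-(n : ℝ) * |Real.log x|) * |Real.log x| ^ (ν - 1)) +
          Sn * (∫ x in ((2:ℝ)^(-ε))..((2:ℝ)^ε), P x)) := hGval
      _ ≤ CB * ((1 + Real.log n) * (CA/(n:ℝ)^ν) + Sn * (8/(n:ℝ))) := by
          apply mul_le_mul_of_nonneg_left _ hCB.le
          apply add_le_add
          · exact mul_le_mul_of_nonneg_left hwle (by linarith)
          · exact mul_le_mul_of_nonneg_left hPle hSn0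
      _ ≤ CB * (2*CA + 8 * (2:ℝ)^ε * cs) * Real.log n / (n:ℝ)^ν := by
          rw [hSn8]
          have e : CB * (2*CA + 8 * (2:ℝ)^ε * cs) * Real.log n / (n:ℝ)^ν
              = CB * ((2 * Real.log n) * (CA/(n:ℝ)^ν) +
                (8 * (2:ℝ)^ε * cs / (n:ℝ)^ν) * Real.log n) := by
            field_simp
          rw [e]
          apply mul_le_mul_of_nonneg_left _ hCB.le
          apply add_le_add
          · exact mul_le_mul_of_nonneg_right (by linarith) (by positivity)
          · nth_rewrite 1 [← mul_one (8 * (2:ℝ)^ε * cs / (n:ℝ)^ν)]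
            exact mul_le_mul_of_nonneg_left (by linarith) (by positivity)
  -- part (ii)
  · intro ρ hρ
    have hρ0 : 0 < ρ := lt_trans hb hρ
    set δ₀ : ℝ := min ((2:ℝ) ^ (-ε) - ρ⁻¹) (ρ - (2:ℝ) ^ ε) with hδ₀_def
    have hainv : ρ⁻¹ < (2:ℝ) ^ (-ε) := by
      rw [Real.rpow_neg two_pos.le, ← one_div, ← one_div]
      exact one_div_lt_one_div_of_lt hb hρ
    have hδ₀ : 0 < δ₀ := lt_min (by linarith) (by linarith)
    refine ⟨2 * π / δ₀ * CA, by positivity, ?_⟩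
    rw [Filter.eventually_atTop]
    refine ⟨1, fun n hn z hz => ?_⟩
    have hNpos : (0:ℝ) < (n:ℝ) ^ ν := Real.rpow_pos_of_pos (by exact_mod_cast hn) _
    -- pointwise distance bound
    have hdist : ∀ x ∈ Set.Icc ((2:ℝ) ^ (-ε)) ((2:ℝ) ^ ε), δ₀ ≤ |x - ‖z‖| := by
      intro x hx
      rcases hz with hz | hz
      · have : δ₀ ≤ x - ‖z‖ := by
          calc δ₀ ≤ (2:ℝ) ^ (-ε) - ρ⁻¹ := min_le_left _ _
            _ ≤ x - ‖z‖ := by have := hx.1; linarith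
        calc δ₀ ≤ x - ‖z‖ := this
          _ ≤ |x - ‖z‖| := le_abs_self _
      · have : δ₀ ≤ ‖z‖ - x := by
          calc δ₀ ≤ ρ - (2:ℝ) ^ ε := min_le_right _ _
            _ ≤ ‖z‖ - x := by have := hx.2; linarith
        calc δ₀ ≤ ‖z‖ - x := this
          _ = -(x - ‖z‖) := by ring
          _ ≤ |x - ‖z‖| := neg_le_abs _
    -- inner integral bound
    have hJle : ∀ x ∈ Set.Icc ((2:ℝ) ^ (-ε)) ((2:ℝ) ^ ε),
        (∫ θ' in (-π)..π, 1 / ‖(x : ℂ) * Complex.exp (Complex.I * θ') - z‖) ≤ 2 * π / δ₀ := by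
      intro x hx
      have hx0 : 0 < x := lt_of_lt_of_le ha hx.1
      have step : (∫ θ' in (-π)..π, 1 / ‖(x : ℂ) * Complex.exp (Complex.I * θ') - z‖) ≤
          ∫ _θ' in (-π)..π, 1/δ₀ := by
        apply helper_le_intervalIntegral (by linarith) (intervalIntegrable_const)
        · intro u _; positivity
        · apply Filter.Eventually.of_forall
          intro θ
          have h1 : δ₀ ≤ ‖(x : ℂ) * Complex.exp (Complex.I * θ) - z‖ :=
            le_trans (hdist x hx) (norm_ge_abs_sub x hx0.le θ z)
          exact one_div_le_one_div_of_le hδ₀ h1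
      rw [intervalIntegral.integral_const, smul_eq_mul] at step
      calc (∫ θ' in (-π)..π, 1 / ‖(x : ℂ) * Complex.exp (Complex.I * θ') - z‖) ≤
            (π - (-π)) * (1/δ₀) := step
        _ = 2 * π / δ₀ := by ring
    -- outer comparison
    have main : (∫ r' in ((2:ℝ) ^ (-ε))..((2:ℝ) ^ ε),
        r' * Real.exp (-(n : ℝ) * |Real.log r'|) * |Real.log r'| ^ (ν - 1) *
          ∫ θ' in (-π)..π, 1 / ‖(r' : ℂ) * Complex.exp (Complex.I * θ') - z‖) ≤
        ∫ r' in ((2:ℝ) ^ (-ε))..((2:ℝ) ^ ε),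
          (r' * Real.exp (-(n : ℝ) * |Real.log r'|) * |Real.log r'| ^ (ν - 1)) * (2 * π / δ₀) := by
      apply helper_le_intervalIntegral hab ((houterA n hn).1.mul_const _)
      · intro x hx
        exact mul_nonneg (hw0 n x (lt_trans ha hx.1)) (hJ0 x z)
      · filter_upwards [ae_restrict_mem measurableSet_Icc] with x hx
        exact mul_le_mul_of_nonneg_left (hJle x hx) (by
          have hx0 : 0 < x := lt_of_lt_of_le ha hx.1
          have h1 : (0:ℝ) ≤ |Real.log x| ^ (ν - 1) := Real.rpow_nonneg (abs_nonneg _) _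
          positivity)
    rw [intervalIntegral.integral_mul_const] at main
    calc (∫ r' in ((2:ℝ) ^ (-ε))..((2:ℝ) ^ ε),
        r' * Real.exp (-(n : ℝ) * |Real.log r'|) * |Real.log r'| ^ (ν - 1) *
          ∫ θ' in (-π)..π, 1 / ‖(r' : ℂ) * Complex.exp (Complex.I * θ') - z‖) ≤
          (∫ r' in ((2:ℝ) ^ (-ε))..((2:ℝ) ^ ε),
            r' * Real.exp (-(n : ℝ) * |Real.log r'|) * |Real.log r'| ^ (ν - 1)) * (2 * π / δ₀) :=
        main
      _ ≤ (CA / (n:ℝ) ^ ν) * (2 * π / δ₀) := by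
          apply mul_le_mul_of_nonneg_right ((houterA n hn).2) (by positivity)
      _ = 2 * π / δ₀ * CA / (n:ℝ) ^ ν := by ring
end

section
/- Suppose Ω : ℝ → ℝ is 2π-periodic of class C^{m−1} for some m ≥ 2, and Ω′(θ) + 1 > 0 for all θ. Then there exist constants ε₀ > 0 and μ > 0 such that whenever 0 < ε < ε₀: |e^{−i·E_m Ω(r,θ)}| ≤ r^{1−μ} for all θ and all 1 ≤ r ≤ 2^{ε}, and |e^{i·E_m Ω(r,θ)}| ≤ r^{μ−1} for all θ and all 2^{−ε} ≤ r ≤ 1. -/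
open scoped Real
open Complex MeasureTheory Filter Set

private lemma per_deriv' {f : ℝ → ℝ} {c : ℝ} (h : Function.Periodic f c) :
    Function.Periodic (deriv f) c := fun x => by
  have hfun : (fun y => f (y + c)) = f := funext h
  rw [← deriv_comp_add_const, hfun]

private lemma per_iter' {f : ℝ → ℝ} {c : ℝ} (h : Function.Periodic f c) (p : ℕ) :
    Function.Periodic (iteratedDeriv p f) c := by
  induction p with
  | zero => simpa using h
  | succ n ih => rw [iteratedDeriv_succ]; exact per_deriv' ih

private lemma per_min' {f : ℝ → ℝ} (hf : Continuous f) (h : Function.Periodic f (2 * π)) :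
    ∃ x₀ : ℝ, ∀ x, f x₀ ≤ f x := by
  obtain ⟨x₀, _, hmin⟩ := (isCompact_Icc : IsCompact (Set.Icc (0:ℝ) (2*π))).exists_isMinOn
    (Set.nonempty_Icc.2 (by positivity)) hf.continuousOn
  refine ⟨x₀, fun x => ?_⟩
  obtain ⟨y, hy, hxy⟩ := h.exists_mem_Ico₀ (by positivity) x
  rw [hxy]
  exact hmin (Set.Ico_subset_Icc_self hy)

private lemma per_max' {f : ℝ → ℝ} (hf : Continuous f) (h : Function.Periodic f (2 * π)) :
    ∃ x₀ : ℝ, ∀ x, f x ≤ f x₀ := by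
  obtain ⟨x₀, hx₀⟩ := per_min' hf.neg (fun x => by simp [h x])
  exact ⟨x₀, fun x => by have := hx₀ x; simpa using this⟩


/-- exponent control: if `Ω : ℝ → ℝ` is `2π`-periodic of class `C^{m-1}`,
`m ≥ 2`, and `Ω'(θ) + 1 > 0` for all `θ`, then there are `ε₀ > 0` and `μ > 0` such that for
`0 < ε < ε₀`: `|e^{-i E_m Ω(r,θ)}| ≤ r^{1-μ}` for all `θ` and `1 ≤ r ≤ 2^ε`, and
`|e^{i E_m Ω(r,θ)}| ≤ r^{μ-1}` for all `θ` and `2^{-ε} ≤ r ≤ 1`. -/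
theorem stmt12 (m : ℕ) (hm : 2 ≤ m) (W : ℝ → ℝ)
    (hper : Function.Periodic W (2 * π)) (hW : ContDiff ℝ (m - 1 : ℕ) W)
    (hmono : ∀ θ : ℝ, 0 < deriv W θ + 1) :
    ∃ ε₀ > (0 : ℝ), ∃ μ > (0 : ℝ), ∀ ε : ℝ, 0 < ε → ε < ε₀ →
      (∀ θ r : ℝ, 1 ≤ r → r ≤ (2 : ℝ) ^ ε →
        ‖Complex.exp (-Complex.I * ExtOp m W r θ)‖ ≤ r ^ ((1 : ℝ) - μ)) ∧
      (∀ θ r : ℝ, (2 : ℝ) ^ (-ε) ≤ r → r ≤ 1 →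
        ‖Complex.exp (Complex.I * ExtOp m W r θ)‖ ≤ r ^ (μ - 1)) := by
  -- continuity of deriv W
  have h1m : (1 : WithTop ℕ∞) ≤ ((m - 1 : ℕ) : WithTop ℕ∞) := by
    have h : (1:ℕ) ≤ m - 1 := by omega
    exact_mod_cast h
  have hderivC : Continuous (deriv W) := hW.continuous_deriv h1m
  -- the minimum of deriv W + 1
  obtain ⟨θ₀, hθ₀⟩ := per_min' (f := fun x => deriv W x + 1) (hderivC.add continuous_const)
    (fun x => by simp only []; rw [per_deriv' hper x])
  set μ : ℝ := (deriv W θ₀ + 1) / 2 with hμdef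
  have hμpos : 0 < μ := by have := hmono θ₀; positivity
  have hμ2 : ∀ θ, 2 * μ ≤ deriv W θ + 1 := by
    intro θ; have h := hθ₀ θ; rw [hμdef]; linarith
  -- bound on higher derivatives
  set F : ℝ → ℝ := fun θ => ∑ p ∈ Finset.range m, |iteratedDeriv p W θ| / (Nat.factorial p : ℝ)
    with hFdef
  have hFcont : Continuous F := by
    apply continuous_finset_sum
    intro p hp
    have hpm : (p : WithTop ℕ∞) ≤ ((m - 1 : ℕ) : WithTop ℕ∞) := by
      have h : p ≤ m - 1 := by simp only [Finset.mem_range] at hp; omega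
      exact_mod_cast h
    exact ((hW.continuous_iteratedDeriv p hpm).abs).div_const _
  have hFper : Function.Periodic F (2 * π) := by
    intro x
    exact Finset.sum_congr rfl fun p _ => by rw [per_iter' hper p x]
  obtain ⟨x₁, hx₁⟩ := per_max' hFcont hFper
  set M : ℝ := F x₁ with hMdef
  have hM0 : 0 ≤ M := by
    have : (0:ℝ) ≤ F 0 := Finset.sum_nonneg fun p _ => by positivity
    exact this.trans (hx₁ 0)
  set C : ℝ := M * m + 1 with hCdef
  have hCpos : 0 < C := by positivity
  -- key estimate
  have key : ∀ θ L : ℝ, |L| ≤ 1 → |L| ≤ μ / C →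
      |(∑ p ∈ Finset.range m, ((iteratedDeriv p W θ : ℝ) : ℂ) / (Nat.factorial p : ℂ)
          * (-Complex.I * (L : ℂ)) ^ p).im + deriv W θ * L| ≤ μ * |L| := by
    intro θ L hL1 hL2
    set t : ℕ → ℂ := fun p => ((iteratedDeriv p W θ : ℝ) : ℂ) / (Nat.factorial p : ℂ)
      * (-Complex.I * (L : ℂ)) ^ p with htdef
    have him : (∑ p ∈ Finset.range m, t p).im = ∑ p ∈ Finset.range m, (t p).im :=
      Complex.im_sum _ _
    have hsplit : ∑ p ∈ Finset.range m, (t p).im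
        = ((t 0).im + (t 1).im) + ∑ p ∈ Finset.Ico 2 m, (t p).im := by
      rw [Finset.range_eq_Ico, ← Finset.sum_Ico_consecutive (fun p => (t p).im)
        (by omega : (0:ℕ) ≤ 2) hm]
      congr 1
      rw [← Finset.range_eq_Ico]
      simp [Finset.sum_range_succ]
    have ht0 : (t 0).im = 0 := by simp [htdef]
    have ht1 : (t 1).im = -(deriv W θ * L) := by
      simp [htdef, iteratedDeriv_one, Complex.div_im, Complex.mul_im]
    have habs : ∀ p ∈ Finset.Ico 2 m, |(t p).im| ≤ M * |L| ^ 2 := by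
      intro p hp
      simp only [Finset.mem_Ico] at hp
      have h1 : |(t p).im| ≤ ‖t p‖ := Complex.abs_im_le_norm _
      have h2 : ‖t p‖ = |iteratedDeriv p W θ| / (Nat.factorial p : ℝ) * |L| ^ p := by
        simp [htdef, map_div₀, map_mul, map_pow, Complex.norm_real,
          _root_.abs_of_nonneg (Nat.cast_nonneg (α := ℝ) (Nat.factorial p))]
      have h3 : |iteratedDeriv p W θ| / (Nat.factorial p : ℝ) ≤ M := by
        have : |iteratedDeriv p W θ| / (Nat.factorial p : ℝ) ≤ F θ := by
          apply Finset.single_le_sum (f := fun q => |iteratedDeriv q W θ| / (Nat.factorial q : ℝ))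
            (fun q _ => by positivity)
          simp; omega
        exact this.trans (hx₁ θ)
      have h4 : |L| ^ p ≤ |L| ^ 2 := pow_le_pow_of_le_one (abs_nonneg L) hL1 hp.1
      calc |(t p).im| ≤ ‖t p‖ := h1
        _ = |iteratedDeriv p W θ| / (Nat.factorial p : ℝ) * |L| ^ p := h2
        _ ≤ M * |L| ^ 2 := by
            apply mul_le_mul h3 h4 (by positivity) hM0
    have hsum : |∑ p ∈ Finset.Ico 2 m, (t p).im| ≤ (m : ℝ) * (M * |L| ^ 2) := by
      calc |∑ p ∈ Finset.Ico 2 m, (t p).im| ≤ ∑ p ∈ Finset.Ico 2 m, |(t p).im| :=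
            Finset.abs_sum_le_sum_abs _ _
        _ ≤ ∑ p ∈ Finset.Ico 2 m, M * |L| ^ 2 := Finset.sum_le_sum habs
        _ = ((Finset.Ico 2 m).card : ℝ) * (M * |L| ^ 2) := by
            rw [Finset.sum_const, nsmul_eq_mul]
        _ ≤ (m : ℝ) * (M * |L| ^ 2) := by
            apply mul_le_mul_of_nonneg_right _ (by positivity)
            simp [Nat.card_Ico]
    have heq : (∑ p ∈ Finset.range m, t p).im + deriv W θ * L
        = ∑ p ∈ Finset.Ico 2 m, (t p).im := by
      rw [him, hsplit, ht0, ht1]; ring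
    rw [heq]
    have hCL : C * |L| ≤ μ := by
      calc C * |L| ≤ C * (μ / C) := mul_le_mul_of_nonneg_left hL2 hCpos.le
        _ = μ := by field_simp
    calc |∑ p ∈ Finset.Ico 2 m, (t p).im| ≤ (m : ℝ) * (M * |L| ^ 2) := hsum
      _ = (M * m) * |L| * |L| := by ring
      _ ≤ C * |L| * |L| := by
          apply mul_le_mul_of_nonneg_right _ (abs_nonneg L)
          apply mul_le_mul_of_nonneg_right _ (abs_nonneg L)
          rw [hCdef]; linarith
      _ ≤ μ * |L| := mul_le_mul_of_nonneg_right hCL (abs_nonneg L)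
  -- choose ε₀
  have hlog2 : (0:ℝ) < Real.log 2 := Real.log_pos one_lt_two
  refine ⟨min (μ / C) 1 / Real.log 2, by positivity, μ, hμpos, ?_⟩
  intro ε hε hεlt
  have hεlog : ε * Real.log 2 < min (μ / C) 1 := by
    rw [lt_div_iff₀ hlog2] at hεlt
    exact hεlt
  constructor
  · intro θ r hr1 hr2
    have hrpos : (0:ℝ) < r := lt_of_lt_of_le one_pos hr1
    set L : ℝ := Real.log r with hLdef
    have hL0 : 0 ≤ L := Real.log_nonneg hr1
    have hLle : L ≤ ε * Real.log 2 := by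
      rw [hLdef]
      calc Real.log r ≤ Real.log ((2:ℝ) ^ ε) := Real.log_le_log hrpos hr2
        _ = ε * Real.log 2 := Real.log_rpow two_pos ε
    have hLabs : |L| = L := abs_of_nonneg hL0
    have hk := key θ L (by rw [hLabs]; linarith [min_le_right (μ/C) (1:ℝ)])
      (by rw [hLabs]; linarith [min_le_left (μ/C) (1:ℝ)])
    rw [hLabs] at hk
    obtain ⟨hk1, hk2⟩ := abs_le.mp hk
    have hre : (-Complex.I * ExtOp m W r θ).re = (ExtOp m W r θ).im := by
      simp [Complex.mul_re]
    rw [Complex.norm_exp, hre, Real.rpow_def_of_pos hrpos, Real.exp_le_exp]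
    have hE : (ExtOp m W r θ).im = (∑ p ∈ Finset.range m,
        ((iteratedDeriv p W θ : ℝ) : ℂ) / (Nat.factorial p : ℂ)
          * (-Complex.I * (L : ℂ)) ^ p).im := by rw [ExtOp, hLdef]
    rw [hE]
    have h2μ := hμ2 θ
    nlinarith [hk2, h2μ, hL0]
  · intro θ r hr1 hr2
    have h2pos : (0:ℝ) < (2:ℝ) ^ (-ε) := Real.rpow_pos_of_pos two_pos _
    have hrpos : (0:ℝ) < r := lt_of_lt_of_le h2pos hr1
    set L : ℝ := Real.log r with hLdef
    have hL0 : L ≤ 0 := Real.log_nonpos hrpos.le hr2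
    have hLge : -(ε * Real.log 2) ≤ L := by
      rw [hLdef]
      calc -(ε * Real.log 2) = Real.log ((2:ℝ) ^ (-ε)) := by
            rw [Real.log_rpow two_pos]; ring
        _ ≤ Real.log r := Real.log_le_log h2pos hr1
    have hLabs : |L| = -L := abs_of_nonpos hL0
    have hk := key θ L (by rw [hLabs]; linarith [min_le_right (μ/C) (1:ℝ)])
      (by rw [hLabs]; linarith [min_le_left (μ/C) (1:ℝ)])
    rw [hLabs] at hk
    obtain ⟨hk1, hk2⟩ := abs_le.mp hk
    have hre : (Complex.I * ExtOp m W r θ).re = -(ExtOp m W r θ).im := by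
      simp [Complex.mul_re]
    rw [Complex.norm_exp, hre, Real.rpow_def_of_pos hrpos, Real.exp_le_exp]
    have hE : (ExtOp m W r θ).im = (∑ p ∈ Finset.range m,
        ((iteratedDeriv p W θ : ℝ) : ℂ) / (Nat.factorial p : ℂ)
          * (-Complex.I * (L : ℂ)) ^ p).im := by rw [ExtOp, hLdef]
    rw [hE]
    have h2μ := hμ2 θ
    nlinarith [hk1, h2μ, hL0]
end
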